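/- arXiv:1702.01855 — 14 statements merged into one kernel-verified Lean document; each statement's English description precedes it below -/
import Mathlib

section
/- (Catalan-type identity) For all integers n ≥ m ≥ 0, (R_n)² − (−g)^{n−m}·(R_m)² = R_{n+m}·R_{n−m}. -/
theorem pow_sub_pow_sq_sub_mul_pow_sub_pow_sq {R : Type*} [CommRing R] (a b : R) (m k : ℕ) :
    (a ^ (m + k) - b ^ (m + k)) ^ 2 - (a * b) ^ k * (a ^ m - b ^ m) ^ 2 =
      (a ^ (m + k + m) - b ^ (m + k + m)) * (a ^ k - b ^ k) := by
  ring

theorem stmt_1_general (K : Type*) [Field K] (a b : K)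
    (g : K) (hg : g = -(a * b))
    (R : ℕ → K)
    (hR : ∀ n : ℕ, R n = (a ^ n - b ^ n) / (a - b))
    (m n : ℕ) (hmn : m ≤ n) :
    (R n) ^ 2 - (-g) ^ (n - m) * (R m) ^ 2 = R (n + m) * R (n - m) := by
  obtain ⟨k, rfl⟩ := Nat.exists_eq_add_of_le hmn
  simp only [hR, hg, neg_neg, Nat.add_sub_cancel_left]
  rw [div_pow, div_pow, div_mul_div_comm, ← sq, mul_div_assoc', ← sub_div,
    pow_sub_pow_sq_sub_mul_pow_sub_pow_sq]

theorem stmt_1 (K : Type*) [Field K] (a b α : K) (hab : a ≠ b) (hα : α ≠ 0)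
    (d g : K) (hd : d = a + b) (hg : g = -(a * b))
    (R L : ℕ → K)
    (hR : ∀ n : ℕ, R n = (a ^ n - b ^ n) / (a - b))
    (hL : ∀ n : ℕ, L n = (a ^ n + b ^ n) / α)
    (m n : ℕ) (hmn : m ≤ n) :
    (R n) ^ 2 - (-g) ^ (n - m) * (R m) ^ 2 = R (n + m) * R (n - m) :=
  stmt_1_general K a b g hg R hR m n hmn
end

section
/- For all integers n ≥ m ≥ 0, R_{n+m} = α·R_n·L_m − (−g)^m·R_{n−m}. -/
theorem pow_sub_pow_mul_pow_add_pow {R : Type*} [CommRing R] (a b : R) (k m : ℕ) :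
    (a ^ (k + m) - b ^ (k + m)) * (a ^ m + b ^ m) =
      a ^ (k + m + m) - b ^ (k + m + m) + (a * b) ^ m * (a ^ k - b ^ k) := by
  ring

theorem stmt_3_general (K : Type*) [Field K] (a b α : K) (hab : a ≠ b) (hα : α ≠ 0)
    (g : K) (hg : g = -(a * b))
    (R L : ℕ → K)
    (hR : ∀ n : ℕ, R n = (a ^ n - b ^ n) / (a - b))
    (hL : ∀ n : ℕ, L n = (a ^ n + b ^ n) / α)
    (m n : ℕ) (hmn : m ≤ n) :
    R (n + m) = α * R n * L m - (-g) ^ m * R (n - m) := by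
  obtain ⟨k, rfl⟩ := Nat.exists_eq_add_of_le' hmn
  have hab_sub : a - b ≠ 0 := sub_ne_zero.mpr hab
  rw [Nat.add_sub_cancel, hR, hR, hR, hL, hg, neg_neg]
  field_simp
  linear_combination -pow_sub_pow_mul_pow_add_pow a b k m

theorem stmt_3 (K : Type*) [Field K] (a b α : K) (hab : a ≠ b) (hα : α ≠ 0)
    (d g : K) (hd : d = a + b) (hg : g = -(a * b))
    (R L : ℕ → K)
    (hR : ∀ n : ℕ, R n = (a ^ n - b ^ n) / (a - b))
    (hL : ∀ n : ℕ, L n = (a ^ n + b ^ n) / α)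
    (m n : ℕ) (hmn : m ≤ n) :
    R (n + m) = α * R n * L m - (-g) ^ m * R (n - m) :=
  stmt_3_general K a b α hab hα g hg R L hR hL m n hmn
end

section
/- For all integers m, n ≥ 0, (a − b)²·R_{m+n+1} = α²·L_{m+1}·L_{n+1} + α²·g·L_m·L_n. -/
theorem sub_mul_pow_sub_pow_eq_pow_add_pow_mul_sub {R : Type*} [CommRing R] (a b : R) (m n : ℕ) :
    (a - b) * (a ^ (m + n + 1) - b ^ (m + n + 1)) =
      (a ^ (m + 1) + b ^ (m + 1)) * (a ^ (n + 1) + b ^ (n + 1))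
        - a * b * (a ^ m + b ^ m) * (a ^ n + b ^ n) := by
  ring

theorem stmt_4_general (K : Type*) [Field K] (a b α : K) (hab : a ≠ b) (hα : α ≠ 0)
    (g : K) (hg : g = -(a * b))
    (R L : ℕ → K)
    (hR : ∀ n : ℕ, R n = (a ^ n - b ^ n) / (a - b))
    (hL : ∀ n : ℕ, L n = (a ^ n + b ^ n) / α)
    (m n : ℕ) :
    (a - b) ^ 2 * R (m + n + 1) = α ^ 2 * L (m + 1) * L (n + 1) + α ^ 2 * g * L m * L n := by
  have hab' : a - b ≠ 0 := sub_ne_zero.mpr hab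
  calc (a - b) ^ 2 * R (m + n + 1) = (a - b) * (a ^ (m + n + 1) - b ^ (m + n + 1)) := by
        rw [hR]; field_simp
    _ = (a ^ (m + 1) + b ^ (m + 1)) * (a ^ (n + 1) + b ^ (n + 1))
          - a * b * (a ^ m + b ^ m) * (a ^ n + b ^ n) :=
        sub_mul_pow_sub_pow_eq_pow_add_pow_mul_sub a b m n
    _ = α ^ 2 * L (m + 1) * L (n + 1) + α ^ 2 * g * L m * L n := by
        simp only [hL, hg]; field_simp; ring

theorem stmt_4 (K : Type*) [Field K] (a b α : K) (hab : a ≠ b) (hα : α ≠ 0)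
    (d g : K) (hd : d = a + b) (hg : g = -(a * b))
    (R L : ℕ → K)
    (hR : ∀ n : ℕ, R n = (a ^ n - b ^ n) / (a - b))
    (hL : ∀ n : ℕ, L n = (a ^ n + b ^ n) / α)
    (m n : ℕ) :
    (a - b) ^ 2 * R (m + n + 1) = α ^ 2 * L (m + 1) * L (n + 1) + α ^ 2 * g * L m * L n :=
  stmt_4_general K a b α hab hα g hg R L hR hL m n
end

section
/- For every integer n ≥ 1, (a − b)²·R_n = α·(L_{n+1} + g·L_{n−1}). -/
theorem sub_mul_pow_succ_sub_pow_succ {R : Type*} [CommRing R] (a b : R) (m : ℕ) :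
    (a - b) * (a ^ (m + 1) - b ^ (m + 1)) =
      a ^ (m + 2) + b ^ (m + 2) - a * b * (a ^ m + b ^ m) := by
  ring

theorem stmt_5_general (K : Type*) [Field K] (a b α : K) (hab : a ≠ b) (hα : α ≠ 0)
    (g : K) (hg : g = -(a * b))
    (R L : ℕ → K)
    (hR : ∀ n : ℕ, R n = (a ^ n - b ^ n) / (a - b))
    (hL : ∀ n : ℕ, L n = (a ^ n + b ^ n) / α)
    (n : ℕ) (hn : 1 ≤ n) :
    (a - b) ^ 2 * R n = α * (L (n + 1) + g * L (n - 1)) := by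
  obtain ⟨m, rfl⟩ := Nat.exists_eq_add_of_le' hn
  have hab' : a - b ≠ 0 := sub_ne_zero.mpr hab
  calc (a - b) ^ 2 * R (m + 1)
      = (a - b) * (a ^ (m + 1) - b ^ (m + 1)) := by
        rw [hR, sq, mul_assoc, mul_div_cancel₀ _ hab']
    _ = a ^ (m + 2) + b ^ (m + 2) - a * b * (a ^ m + b ^ m) :=
        sub_mul_pow_succ_sub_pow_succ a b m
    _ = α * (L (m + 1 + 1) + g * L (m + 1 - 1)) := by
        rw [hL, hL, hg, Nat.add_sub_cancel, mul_div_assoc', ← add_div,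
          mul_div_cancel₀ _ hα]
        ring

theorem stmt_5 (K : Type*) [Field K] (a b α : K) (hab : a ≠ b) (hα : α ≠ 0)
    (d g : K) (hd : d = a + b) (hg : g = -(a * b))
    (R L : ℕ → K)
    (hR : ∀ n : ℕ, R n = (a ^ n - b ^ n) / (a - b))
    (hL : ∀ n : ℕ, L n = (a ^ n + b ^ n) / α)
    (n : ℕ) (hn : 1 ≤ n) :
    (a - b) ^ 2 * R n = α * (L (n + 1) + g * L (n - 1)) :=
  stmt_5_general K a b α hab hα g hg R L hR hL n hn
end

section
/- For all integers n ≥ m ≥ 0, α·(L_m·R_n − L_n·R_m) = 2·(−g)^m·R_{n−m}. -/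
theorem pow_add_pow_mul_pow_sub_pow_sub_swap {R : Type*} [CommRing R] (a b : R) (m k : ℕ) :
    (a ^ m + b ^ m) * (a ^ (m + k) - b ^ (m + k)) - (a ^ (m + k) + b ^ (m + k)) * (a ^ m - b ^ m)
      = 2 * (a * b) ^ m * (a ^ k - b ^ k) := by
  ring

theorem stmt_8_general (K : Type*) [Field K] (a b α : K) (hab : a ≠ b) (hα : α ≠ 0)
    (g : K) (hg : g = -(a * b))
    (R L : ℕ → K)
    (hR : ∀ n : ℕ, R n = (a ^ n - b ^ n) / (a - b))
    (hL : ∀ n : ℕ, L n = (a ^ n + b ^ n) / α)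
    (m n : ℕ) (hmn : m ≤ n) :
    α * (L m * R n - L n * R m) = 2 * (-g) ^ m * R (n - m) := by
  obtain ⟨k, rfl⟩ := Nat.exists_eq_add_of_le hmn
  have hab' : a - b ≠ 0 := sub_ne_zero.mpr hab
  calc α * (L m * R (m + k) - L (m + k) * R m)
      = ((a ^ m + b ^ m) * (a ^ (m + k) - b ^ (m + k))
          - (a ^ (m + k) + b ^ (m + k)) * (a ^ m - b ^ m)) / (a - b) := by
        simp only [hR, hL]
        field_simp
    _ = 2 * (-g) ^ m * R (m + k - m) := by
        rw [pow_add_pow_mul_pow_sub_pow_sub_swap, hg, neg_neg, Nat.add_sub_cancel_left, hR,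
          mul_div_assoc]

theorem stmt_8 (K : Type*) [Field K] (a b α : K) (hab : a ≠ b) (hα : α ≠ 0)
    (d g : K) (hd : d = a + b) (hg : g = -(a * b))
    (R L : ℕ → K)
    (hR : ∀ n : ℕ, R n = (a ^ n - b ^ n) / (a - b))
    (hL : ∀ n : ℕ, L n = (a ^ n + b ^ n) / α)
    (m n : ℕ) (hmn : m ≤ n) :
    α * (L m * R n - L n * R m) = 2 * (-g) ^ m * R (n - m) :=
  stmt_8_general K a b α hab hα g hg R L hR hL m n hmn
end

section
/- For every integer n ≥ 0, α²·(g·(L_n)² + (L_{n+1})²) = (a − b)²·(g·(R_n)² + (R_{n+1})²), and both quantities equal (a − b)²·R_{2n+1}. -/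
/-! Multiplying out, `α L_m = aᵐ + bᵐ` and `(a - b) R_m = aᵐ - bᵐ`, and with `g = -ab` both quadratic
forms `-ab (aⁿ ± bⁿ)² + (aⁿ⁺¹ ± bⁿ⁺¹)²` expand to `(a - b)(a²ⁿ⁺¹ - b²ⁿ⁺¹)`: the cross terms
`±2aⁿ⁺¹bⁿ⁺¹` cancel. -/

section CommRing

variable {R : Type*} [CommRing R]

theorem neg_mul_mul_sq_pow_add_pow_add_sq (a b : R) (n : ℕ) :
    -(a * b) * (a ^ n + b ^ n) ^ 2 + (a ^ (n + 1) + b ^ (n + 1)) ^ 2 =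
      (a - b) * (a ^ (2 * n + 1) - b ^ (2 * n + 1)) := by
  ring

theorem neg_mul_mul_sq_pow_sub_pow_add_sq (a b : R) (n : ℕ) :
    -(a * b) * (a ^ n - b ^ n) ^ 2 + (a ^ (n + 1) - b ^ (n + 1)) ^ 2 =
      (a - b) * (a ^ (2 * n + 1) - b ^ (2 * n + 1)) := by
  ring

end CommRing

/-- Holds also for `a = b`, where the division is junk but `aⁿ - bⁿ = 0`. -/
theorem sub_mul_pow_sub_pow_div_sub {K : Type*} [Field K] (a b : K) (n : ℕ) :
    (a - b) * ((a ^ n - b ^ n) / (a - b)) = a ^ n - b ^ n := by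
  rw [mul_comm]
  exact div_mul_cancel_of_imp fun h => by rw [sub_eq_zero.mp h, sub_self]

theorem stmt_9_general (K : Type*) [Field K] (a b α : K) (hα : α ≠ 0)
    (g : K) (hg : g = -(a * b))
    (R L : ℕ → K)
    (hR : ∀ n : ℕ, R n = (a ^ n - b ^ n) / (a - b))
    (hL : ∀ n : ℕ, L n = (a ^ n + b ^ n) / α)
    (n : ℕ) :
    α ^ 2 * (g * (L n) ^ 2 + (L (n + 1)) ^ 2) = (a - b) ^ 2 * (g * (R n) ^ 2 + (R (n + 1)) ^ 2) ∧
      (a - b) ^ 2 * (g * (R n) ^ 2 + (R (n + 1)) ^ 2) = (a - b) ^ 2 * R (2 * n + 1) := by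
  have hαL (m : ℕ) : α * L m = a ^ m + b ^ m := by rw [hL]; exact mul_div_cancel₀ _ hα
  have hR' (m : ℕ) : (a - b) * R m = a ^ m - b ^ m := by rw [hR]; exact sub_mul_pow_sub_pow_div_sub a b m
  have hLform : α ^ 2 * (g * (L n) ^ 2 + (L (n + 1)) ^ 2) =
      -(a * b) * (α * L n) ^ 2 + (α * L (n + 1)) ^ 2 := by rw [hg]; ring
  have hRform : (a - b) ^ 2 * (g * (R n) ^ 2 + (R (n + 1)) ^ 2) =
      -(a * b) * ((a - b) * R n) ^ 2 + ((a - b) * R (n + 1)) ^ 2 := by rw [hg]; ring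
  rw [hLform, hRform, hαL, hαL, hR', hR', neg_mul_mul_sq_pow_add_pow_add_sq,
    neg_mul_mul_sq_pow_sub_pow_add_sq, sq, mul_assoc, hR']
  exact ⟨rfl, rfl⟩

theorem stmt_9 (K : Type*) [Field K] (a b α : K) (hab : a ≠ b) (hα : α ≠ 0)
    (d g : K) (hd : d = a + b) (hg : g = -(a * b))
    (R L : ℕ → K)
    (hR : ∀ n : ℕ, R n = (a ^ n - b ^ n) / (a - b))
    (hL : ∀ n : ℕ, L n = (a ^ n + b ^ n) / α)
    (n : ℕ) :
    α ^ 2 * (g * (L n) ^ 2 + (L (n + 1)) ^ 2) = (a - b) ^ 2 * (g * (R n) ^ 2 + (R (n + 1)) ^ 2) ∧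
      (a - b) ^ 2 * (g * (R n) ^ 2 + (R (n + 1)) ^ 2) = (a - b) ^ 2 * R (2 * n + 1) :=
  stmt_9_general K a b α hα g hg R L hR hL n
end

section
/- For every integer n ≥ 0, α·R_{n+1}·L_n = R_{2n+1} + (−g)ⁿ. -/
theorem sub_pow_succ_mul_add_pow {R : Type*} [CommRing R] (a b : R) (n : ℕ) :
    (a ^ (n + 1) - b ^ (n + 1)) * (a ^ n + b ^ n) =
      a ^ (2 * n + 1) - b ^ (2 * n + 1) + (a * b) ^ n * (a - b) := by
  ring

theorem stmt_10_general (K : Type*) [Field K] (a b α : K) (hab : a ≠ b) (hα : α ≠ 0)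
    (g : K) (hg : g = -(a * b))
    (R L : ℕ → K)
    (hR : ∀ n : ℕ, R n = (a ^ n - b ^ n) / (a - b))
    (hL : ∀ n : ℕ, L n = (a ^ n + b ^ n) / α)
    (n : ℕ) :
    α * R (n + 1) * L n = R (2 * n + 1) + (-g) ^ n := by
  have hab' : a - b ≠ 0 := sub_ne_zero.mpr hab
  rw [hR, hL, hR, hg, neg_neg]
  calc α * ((a ^ (n + 1) - b ^ (n + 1)) / (a - b)) * ((a ^ n + b ^ n) / α)
      = (a ^ (n + 1) - b ^ (n + 1)) * (a ^ n + b ^ n) / (a - b) := by field_simp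
    _ = (a ^ (2 * n + 1) - b ^ (2 * n + 1)) / (a - b) + (a * b) ^ n := by
      rw [sub_pow_succ_mul_add_pow, add_div, mul_div_cancel_right₀ _ hab']

theorem stmt_10 (K : Type*) [Field K] (a b α : K) (hab : a ≠ b) (hα : α ≠ 0)
    (d g : K) (hd : d = a + b) (hg : g = -(a * b))
    (R L : ℕ → K)
    (hR : ∀ n : ℕ, R n = (a ^ n - b ^ n) / (a - b))
    (hL : ∀ n : ℕ, L n = (a ^ n + b ^ n) / α)
    (n : ℕ) :
    α * R (n + 1) * L n = R (2 * n + 1) + (-g) ^ n :=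
  stmt_10_general K a b α hab hα g hg R L hR hL n
end

section
/- For all integers m, n ≥ 0, 2·α·L_{m+n} = α²·L_m·L_n + (a − b)²·R_m·R_n. -/
theorem add_pow_mul_add_pow_add_sub_pow_mul_sub_pow {R : Type*} [CommRing R] (a b : R) (m n : ℕ) :
    (a ^ m + b ^ m) * (a ^ n + b ^ n) + (a ^ m - b ^ m) * (a ^ n - b ^ n) =
      2 * (a ^ (m + n) + b ^ (m + n)) := by
  ring

theorem stmt_11_general (K : Type*) [Field K] (a b α : K) (hab : a ≠ b) (hα : α ≠ 0)
    (R L : ℕ → K)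
    (hR : ∀ n : ℕ, R n = (a ^ n - b ^ n) / (a - b))
    (hL : ∀ n : ℕ, L n = (a ^ n + b ^ n) / α)
    (m n : ℕ) :
    2 * α * L (m + n) = α ^ 2 * L m * L n + (a - b) ^ 2 * R m * R n := by
  have hαL (k : ℕ) : α * L k = a ^ k + b ^ k := by
    rw [hL, mul_div_cancel₀ _ hα]
  have hsubR (k : ℕ) : (a - b) * R k = a ^ k - b ^ k := by
    rw [hR, mul_div_cancel₀ _ (sub_ne_zero.mpr hab)]
  calc 2 * α * L (m + n) = 2 * (α * L (m + n)) := by ring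
    _ = (α * L m) * (α * L n) + ((a - b) * R m) * ((a - b) * R n) := by
      rw [hαL, hαL, hαL, hsubR, hsubR, add_pow_mul_add_pow_add_sub_pow_mul_sub_pow]
    _ = α ^ 2 * L m * L n + (a - b) ^ 2 * R m * R n := by ring

theorem stmt_11 (K : Type*) [Field K] (a b α : K) (hab : a ≠ b) (hα : α ≠ 0)
    (d g : K) (hd : d = a + b) (hg : g = -(a * b))
    (R L : ℕ → K)
    (hR : ∀ n : ℕ, R n = (a ^ n - b ^ n) / (a - b))
    (hL : ∀ n : ℕ, L n = (a ^ n + b ^ n) / α)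
    (m n : ℕ) :
    2 * α * L (m + n) = α ^ 2 * L m * L n + (a - b) ^ 2 * R m * R n :=
  stmt_11_general K a b α hab hα R L hR hL m n
end

section
/- For all integers m ≥ n ≥ 0, α·(L_{m+n} − (−g)ⁿ·L_{m−n}) = (a − b)²·R_m·R_n. -/
theorem pow_add_sub_pow_mul_pow_sub_pow {R : Type*} [CommRing R] (a b : R) (m n : ℕ) :
    (a ^ (m + n) - b ^ (m + n)) * (a ^ n - b ^ n) =
      a ^ (m + n + n) + b ^ (m + n + n) - (a * b) ^ n * (a ^ m + b ^ m) := by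
  ring

theorem stmt_12_general (K : Type*) [Field K] (a b α : K) (hab : a ≠ b) (hα : α ≠ 0)
    (g : K) (hg : g = -(a * b))
    (R L : ℕ → K)
    (hR : ∀ n : ℕ, R n = (a ^ n - b ^ n) / (a - b))
    (hL : ∀ n : ℕ, L n = (a ^ n + b ^ n) / α)
    (m n : ℕ) (hnm : n ≤ m) :
    α * (L (m + n) - (-g) ^ n * L (m - n)) = (a - b) ^ 2 * R m * R n := by
  obtain ⟨k, rfl⟩ := Nat.exists_eq_add_of_le' hnm
  have hαL (j : ℕ) : α * L j = a ^ j + b ^ j := by rw [hL, mul_div_cancel₀ _ hα]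
  have hab' : a - b ≠ 0 := sub_ne_zero.mpr hab
  rw [mul_sub, mul_left_comm, hαL, hαL, hg, neg_neg, Nat.add_sub_cancel,
    ← pow_add_sub_pow_mul_pow_sub_pow, hR, hR]
  field_simp

theorem stmt_12 (K : Type*) [Field K] (a b α : K) (hab : a ≠ b) (hα : α ≠ 0)
    (d g : K) (hd : d = a + b) (hg : g = -(a * b))
    (R L : ℕ → K)
    (hR : ∀ n : ℕ, R n = (a ^ n - b ^ n) / (a - b))
    (hL : ∀ n : ℕ, L n = (a ^ n + b ^ n) / α)
    (m n : ℕ) (hnm : n ≤ m) :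
    α * (L (m + n) - (-g) ^ n * L (m - n)) = (a - b) ^ 2 * R m * R n :=
  stmt_12_general K a b α hab hα g hg R L hR hL m n hnm
end

section
/- For every integer n ≥ 1, α²·L_{n−1}·L_{n+1} − (a − b)²·(R_n)² = (−g)^{n−1}·(α·L_2 − 2g). -/
theorem pow_add_pow_mul_pow_add_pow_sub_sq {R : Type*} [CommRing R] (a b : R) (m : ℕ) :
    (a ^ m + b ^ m) * (a ^ (m + 2) + b ^ (m + 2)) - (a ^ (m + 1) - b ^ (m + 1)) ^ 2 =
      (a * b) ^ m * (a ^ 2 + b ^ 2 + 2 * (a * b)) := by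
  ring

theorem stmt_13_general (K : Type*) [Field K] (a b α : K) (hab : a ≠ b) (hα : α ≠ 0)
    (g : K) (hg : g = -(a * b))
    (R L : ℕ → K)
    (hR : ∀ n : ℕ, R n = (a ^ n - b ^ n) / (a - b))
    (hL : ∀ n : ℕ, L n = (a ^ n + b ^ n) / α)
    (n : ℕ) (hn : 1 ≤ n) :
    α ^ 2 * L (n - 1) * L (n + 1) - (a - b) ^ 2 * (R n) ^ 2 =
      (-g) ^ (n - 1) * (α * L 2 - 2 * g) := by
  obtain ⟨m, rfl⟩ := Nat.exists_eq_add_of_le' hn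
  have hab' : a - b ≠ 0 := sub_ne_zero.mpr hab
  have hαL : ∀ k, α * L k = a ^ k + b ^ k := fun k => by rw [hL, mul_div_cancel₀ _ hα]
  have hR' : (a - b) * R (m + 1) = a ^ (m + 1) - b ^ (m + 1) := by rw [hR, mul_div_cancel₀ _ hab']
  calc α ^ 2 * L (m + 1 - 1) * L (m + 1 + 1) - (a - b) ^ 2 * R (m + 1) ^ 2
      = (α * L m) * (α * L (m + 2)) - ((a - b) * R (m + 1)) ^ 2 := by
        simp only [Nat.add_sub_cancel]; ring
    _ = (a * b) ^ m * (a ^ 2 + b ^ 2 + 2 * (a * b)) := by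
      rw [hαL, hαL, hR', pow_add_pow_mul_pow_add_pow_sub_sq]
    _ = (-g) ^ (m + 1 - 1) * (α * L 2 - 2 * g) := by
        rw [hαL, hg, Nat.add_sub_cancel, neg_neg]; ring

theorem stmt_13 (K : Type*) [Field K] (a b α : K) (hab : a ≠ b) (hα : α ≠ 0)
    (d g : K) (hd : d = a + b) (hg : g = -(a * b))
    (R L : ℕ → K)
    (hR : ∀ n : ℕ, R n = (a ^ n - b ^ n) / (a - b))
    (hL : ∀ n : ℕ, L n = (a ^ n + b ^ n) / α)
    (n : ℕ) (hn : 1 ≤ n) :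
    α ^ 2 * L (n - 1) * L (n + 1) - (a - b) ^ 2 * (R n) ^ 2 =
      (-g) ^ (n - 1) * (α * L 2 - 2 * g) :=
  stmt_13_general K a b α hab hα g hg R L hR hL n hn
end

section
/- For every integer n ≥ 0, L_{5n} = L_n·((α·L_{2n} − (−g)ⁿ)² + (a − b)²·(−g)ⁿ·(R_n)²). -/
/-! With `u = aⁿ`, `v = bⁿ` we have `(-g)ⁿ = u v`, `α L₂ₙ = u² + v²` and `(a - b) Rₙ = u - v`,
so the claim is the factorisation `u⁵ + v⁵ = (u + v)((u² + v² - uv)² + (u - v)² uv)` divided by `α`. -/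

theorem pow_five_add_pow_five {R : Type*} [CommRing R] (u v : R) :
    u ^ 5 + v ^ 5 = (u + v) * ((u ^ 2 + v ^ 2 - u * v) ^ 2 + (u - v) ^ 2 * (u * v)) := by
  ring

theorem stmt_14_general (K : Type*) [Field K] (a b α : K) (hα : α ≠ 0)
    (g : K) (hg : g = -(a * b))
    (R L : ℕ → K)
    (hR : ∀ n : ℕ, R n = (a ^ n - b ^ n) / (a - b))
    (hL : ∀ n : ℕ, L n = (a ^ n + b ^ n) / α)
    (n : ℕ) :
    L (5 * n) = L n * ((α * L (2 * n) - (-g) ^ n) ^ 2 + (a - b) ^ 2 * (-g) ^ n * (R n) ^ 2) := by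
  have hg_pow : (-g) ^ n = a ^ n * b ^ n := by rw [hg, neg_neg, mul_pow]
  have hL_double : α * L (2 * n) = (a ^ n) ^ 2 + (b ^ n) ^ 2 := by
    rw [hL, mul_div_cancel₀ _ hα, pow_mul', pow_mul']
  have hR_scaled : (a - b) ^ 2 * R n ^ 2 = (a ^ n - b ^ n) ^ 2 := by
    rw [← mul_pow, hR, sub_mul_pow_sub_pow_div_sub]
  calc L (5 * n) = ((a ^ n) ^ 5 + (b ^ n) ^ 5) / α := by rw [hL, pow_mul', pow_mul']
    _ = L n * (((a ^ n) ^ 2 + (b ^ n) ^ 2 - a ^ n * b ^ n) ^ 2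
          + (a ^ n - b ^ n) ^ 2 * (a ^ n * b ^ n)) := by
      rw [pow_five_add_pow_five, hL, div_mul_eq_mul_div]
    _ = L n * ((α * L (2 * n) - (-g) ^ n) ^ 2 + (a - b) ^ 2 * (-g) ^ n * (R n) ^ 2) := by
      rw [hL_double, hg_pow, mul_right_comm _ _ (R n ^ 2), hR_scaled]

theorem stmt_14 (K : Type*) [Field K] (a b α : K) (hab : a ≠ b) (hα : α ≠ 0)
    (d g : K) (hd : d = a + b) (hg : g = -(a * b))
    (R L : ℕ → K)
    (hR : ∀ n : ℕ, R n = (a ^ n - b ^ n) / (a - b))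
    (hL : ∀ n : ℕ, L n = (a ^ n + b ^ n) / α)
    (n : ℕ) :
    L (5 * n) = L n * ((α * L (2 * n) - (-g) ^ n) ^ 2 + (a - b) ^ 2 * (-g) ^ n * (R n) ^ 2) :=
  stmt_14_general K a b α hα g hg R L hR hL n
end

section
/- For all integers n, m, i ≥ 0, R_{n+i}·R_{n+m} − R_n·R_{n+m+i} = (−g)ⁿ·R_i·R_m. -/
/-! Clearing the denominators `a - b` turns the identity into a polynomial identity in `a` and `b`,
which holds over any commutative ring. -/

theorem pow_sub_pow_vajda {A : Type*} [CommRing A] (x y : A) (n m i : ℕ) :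
    (x ^ (n + i) - y ^ (n + i)) * (x ^ (n + m) - y ^ (n + m))
      - (x ^ n - y ^ n) * (x ^ (n + m + i) - y ^ (n + m + i))
      = (x * y) ^ n * (x ^ i - y ^ i) * (x ^ m - y ^ m) := by
  ring

theorem stmt_15_general (K : Type*) [Field K] (a b : K) (hab : a ≠ b)
    (g : K) (hg : g = -(a * b))
    (R : ℕ → K)
    (hR : ∀ n : ℕ, R n = (a ^ n - b ^ n) / (a - b))
    (n m i : ℕ) :
    R (n + i) * R (n + m) - R n * R (n + m + i) = (-g) ^ n * R i * R m := by
  have hab' : a - b ≠ 0 := sub_ne_zero.mpr hab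
  simp only [hR, hg, neg_neg]
  field_simp
  exact pow_sub_pow_vajda a b n m i

theorem stmt_15 (K : Type*) [Field K] (a b α : K) (hab : a ≠ b) (hα : α ≠ 0)
    (d g : K) (hd : d = a + b) (hg : g = -(a * b))
    (R L : ℕ → K)
    (hR : ∀ n : ℕ, R n = (a ^ n - b ^ n) / (a - b))
    (hL : ∀ n : ℕ, L n = (a ^ n + b ^ n) / α)
    (n m i : ℕ) :
    R (n + i) * R (n + m) - R n * R (n + m + i) = (-g) ^ n * R i * R m :=
  stmt_15_general K a b hab g hg R hR n m i
end

section
/- For all integers m, n, s, t, r ≥ 0 with r ≤ min(m, n, s, t) and m + n = s + t, one has R_m·R_n − R_s·R_t = (−g)ʳ·(R_{m−r}·R_{n−r} − R_{s−r}·R_{t−r}). -/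
/-! The cross terms of `(aᵐ⁺ʳ - bᵐ⁺ʳ)(aⁿ⁺ʳ - bⁿ⁺ʳ)` carry the factor `(ab)ʳ`, while the pure terms
`aᵐ⁺ⁿ⁺²ʳ` and `bᵐ⁺ⁿ⁺²ʳ` cancel against those of the `s, t` product because `m + n = s + t`.
Since `R` is `n ↦ aⁿ - bⁿ` scaled by the constant `(a - b)⁻¹`, the identity for `R` follows, with
`-g = ab`. -/

theorem pow_sub_pow_mul_sub_shift {A : Type*} [CommRing A] (a b : A) {m n s t : ℕ}
    (h : m + n = s + t) (r : ℕ) :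
    (a ^ (m + r) - b ^ (m + r)) * (a ^ (n + r) - b ^ (n + r))
        - (a ^ (s + r) - b ^ (s + r)) * (a ^ (t + r) - b ^ (t + r))
      = (a * b) ^ r * ((a ^ m - b ^ m) * (a ^ n - b ^ n) - (a ^ s - b ^ s) * (a ^ t - b ^ t)) := by
  have ha : a ^ m * a ^ n = a ^ s * a ^ t := by rw [← pow_add, ← pow_add, h]
  have hb : b ^ m * b ^ n = b ^ s * b ^ t := by rw [← pow_add, ← pow_add, h]
  simp only [pow_add, mul_pow]
  linear_combination (a ^ r * a ^ r - a ^ r * b ^ r) * ha + (b ^ r * b ^ r - a ^ r * b ^ r) * hb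

theorem stmt_16_general (K : Type*) [Field K] (a b : K)
    (g : K) (hg : g = -(a * b))
    (R : ℕ → K)
    (hR : ∀ n : ℕ, R n = (a ^ n - b ^ n) / (a - b))
    (m n s t r : ℕ) (hm : r ≤ m) (hn : r ≤ n) (hs : r ≤ s) (ht : r ≤ t)
    (hsum : m + n = s + t) :
    R m * R n - R s * R t = (-g) ^ r * (R (m - r) * R (n - r) - R (s - r) * R (t - r)) := by
  obtain ⟨m, rfl⟩ := Nat.exists_eq_add_of_le' hm
  obtain ⟨n, rfl⟩ := Nat.exists_eq_add_of_le' hn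
  obtain ⟨s, rfl⟩ := Nat.exists_eq_add_of_le' hs
  obtain ⟨t, rfl⟩ := Nat.exists_eq_add_of_le' ht
  have hR' : ∀ k, R k = (a ^ k - b ^ k) * (a - b)⁻¹ := fun k ↦ by rw [hR, div_eq_mul_inv]
  simp only [hR', Nat.add_sub_cancel, hg, neg_neg]
  linear_combination (a - b)⁻¹ ^ 2 * pow_sub_pow_mul_sub_shift a b (by omega : m + n = s + t) r

theorem stmt_16 (K : Type*) [Field K] (a b α : K) (hab : a ≠ b) (hα : α ≠ 0)
    (d g : K) (hd : d = a + b) (hg : g = -(a * b))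
    (R L : ℕ → K)
    (hR : ∀ n : ℕ, R n = (a ^ n - b ^ n) / (a - b))
    (hL : ∀ n : ℕ, L n = (a ^ n + b ^ n) / α)
    (m n s t r : ℕ) (hm : r ≤ m) (hn : r ≤ n) (hs : r ≤ s) (ht : r ≤ t)
    (hsum : m + n = s + t) :
    R m * R n - R s * R t = (-g) ^ r * (R (m - r) * R (n - r) - R (s - r) * R (t - r)) :=
  stmt_16_general K a b g hg R hR m n s t r hm hn hs ht hsum
end

section
/- For every integer n ≥ 0, R_{3n} = (a − b)²·(R_n)³ + 3·(−g)ⁿ·R_n. -/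
theorem stmt_17_general (K : Type*) [Field K] (a b : K) (hab : a ≠ b)
    (g : K) (hg : g = -(a * b))
    (R : ℕ → K)
    (hR : ∀ n : ℕ, R n = (a ^ n - b ^ n) / (a - b))
    (n : ℕ) :
    R (3 * n) = (a - b) ^ 2 * (R n) ^ 3 + 3 * (-g) ^ n * R n := by
  have hab' : a - b ≠ 0 := sub_ne_zero.mpr hab
  simp only [hR, hg, neg_neg, mul_pow, pow_mul]
  field_simp
  ring

theorem stmt_17 (K : Type*) [Field K] (a b α : K) (hab : a ≠ b) (hα : α ≠ 0)
    (d g : K) (hd : d = a + b) (hg : g = -(a * b))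
    (R L : ℕ → K)
    (hR : ∀ n : ℕ, R n = (a ^ n - b ^ n) / (a - b))
    (hL : ∀ n : ℕ, L n = (a ^ n + b ^ n) / α)
    (n : ℕ) :
    R (3 * n) = (a - b) ^ 2 * (R n) ^ 3 + 3 * (-g) ^ n * R n :=
  stmt_17_general K a b hab g hg R hR n
end
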